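/- Let A ∈ ℝ^{n×n} be symmetric with largest eigenvalue α₁ and smallest eigenvalue α_n, let g ∈ ℝ^n be nonzero, Δ > 0, and q(s) = gᵀs + (1/2)sᵀAs. Suppose (λ_opt, s_opt) satisfies the TRS optimality conditions with ‖s_opt‖ = Δ and A + λ_opt·I positive definite, and set κ = (α₁ + λ_opt)/(α_n + λ_opt). Let k ≥ 0 and let s_k be a global minimizer of q over {s ∈ K_k(g,A) : ‖s‖ ≤ Δ} with ‖s_k‖ = Δ. Then ‖s_k − s_opt‖ ≤ 4·√κ·Δ·((√κ − 1)/(√κ + 1))^{k+1}. -/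

import Mathlib

open Matrix

noncomputable section

/-- Euclidean 2-norm of a finitely indexed real vector. -/
def vecEnorm {ι : Type*} [Fintype ι] (v : ι → ℝ) : ℝ := ‖(WithLp.equiv 2 (ι → ℝ)).symm v‖

/-- The Krylov subspace `K_k(g,A) = span{g, Ag, …, A^k g}`. -/
def krylov {n : ℕ} (A : Matrix (Fin n) (Fin n) ℝ) (g : Fin n → ℝ) (k : ℕ) :
    Submodule ℝ (Fin n → ℝ) :=
  Submodule.span ℝ {v | ∃ i : ℕ, i ≤ k ∧ v = (A ^ i).mulVec g}

section AuxLemmas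
open Polynomial Polynomial.Chebyshev


lemma cheb_T_pair (y : ℝ) (hy : y ≠ 0) (m : ℕ) :
    (T ℝ m).eval ((y + y⁻¹)/2) = (y^m + (y⁻¹)^m)/2 ∧
    (T ℝ (m+1)).eval ((y + y⁻¹)/2) = (y^(m+1) + (y⁻¹)^(m+1))/2 := by
  induction m with
  | zero => constructor <;> simp [T_zero, T_one]
  | succ m ih =>
    refine ⟨ih.2, ?_⟩
    have h := congrArg (Polynomial.eval ((y + y⁻¹)/2)) (T_add_two ℝ (m : ℤ))
    have e2 : ((m : ℤ) + 2) = (((m+1 : ℕ) : ℤ) + 1) := by push_cast; ring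
    rw [e2] at h
    simp only [eval_sub, eval_mul, eval_ofNat, eval_X] at h
    rw [h]
    rw [ih.1, ih.2]
    have hy' : y⁻¹ ≠ 0 := inv_ne_zero hy
    have hyy : y * y⁻¹ = 1 := mul_inv_cancel₀ hy
    linear_combination ((y⁻¹)^m + y^m)/2 * hyy

lemma cheb_T_deg_pair (m : ℕ) :
    (T ℝ m).natDegree ≤ m ∧ (T ℝ (m+1)).natDegree ≤ m+1 := by
  induction m with
  | zero => constructor <;> simp [T_zero, T_one, natDegree_X_le]
  | succ m ih =>
    refine ⟨ih.2, ?_⟩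
    have e2 : (((m+1 : ℕ) : ℤ) + 1) = ((m : ℤ) + 2) := by push_cast; ring
    rw [e2, T_add_two]
    refine le_trans (natDegree_sub_le _ _) ?_
    simp only [max_le_iff]
    constructor
    · refine le_trans (natDegree_mul_le) ?_
      have h1 : ((2 : ℝ[X]) * X).natDegree ≤ 1 := by
        refine le_trans natDegree_mul_le ?_
        simp [natDegree_X_le]
      have := ih.2
      omega
    · exact le_trans ih.1 (by omega)

lemma cheb_T_abs_le (m : ℕ) {x : ℝ} (h1 : -1 ≤ x) (h2 : x ≤ 1) :
    |(T ℝ m).eval x| ≤ 1 := by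
  rw [← Real.cos_arccos h1 h2, T_real_cos]
  exact Real.abs_cos_le_one _

lemma resid_poly (a b : ℝ) (ha : 0 < a) (hab : a ≤ b) (m : ℕ) (hm : 1 ≤ m) :
    ∃ R : ℝ[X], R.natDegree ≤ m ∧ R.eval 0 = 1 ∧
      ∀ t, a ≤ t → t ≤ b →
        |R.eval t| ≤ 2 * ((Real.sqrt (b/a) - 1)/(Real.sqrt (b/a) + 1))^m := by
  rcases eq_or_lt_of_le hab with h | h
  · -- a = b
    subst h
    refine ⟨1 - C a⁻¹ * X, ?_, by simp, ?_⟩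
    · refine le_trans (natDegree_sub_le _ _) ?_
      simp only [natDegree_one, max_le_iff]
      refine ⟨by omega, le_trans natDegree_mul_le ?_⟩
      simp [natDegree_X_le]
      omega
    · intro t ht1 ht2
      have ht : t = a := le_antisymm ht2 ht1
      subst ht
      have : Real.sqrt (t/t) = 1 := by
        rw [div_self (ne_of_gt ha)]; exact Real.sqrt_one
      rw [this]
      simp [inv_mul_cancel₀ (ne_of_gt ha), zero_pow (by omega : m ≠ 0)]
  · -- a < b
    set κ := b / a with hκdef
    have hκ1 : 1 < κ := (one_lt_div ha).mpr h
    have hκ0 : 0 ≤ κ := by linarith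
    set s := Real.sqrt κ with hsdef
    have hs2 : s^2 = κ := Real.sq_sqrt hκ0
    have hs1 : 1 < s := by
      nlinarith [Real.sqrt_nonneg κ]
    set y := (s+1)/(s-1) with hydef
    have hy1 : 1 < y := by
      rw [hydef, lt_div_iff₀ (by linarith)]
      linarith
    have hy0 : y ≠ 0 := by linarith
    set ρ := (s-1)/(s+1) with hρdef
    have hρy : ρ = y⁻¹ := by
      rw [hρdef, hydef]
      field_simp
    have hρ0 : 0 < ρ := div_pos (by linarith) (by linarith)
    set c := (a+b)/(b-a) with hcdef
    have h1 : s - 1 ≠ 0 := by linarith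
    have h2 : s + 1 ≠ 0 := by linarith
    have hκm1 : (0:ℝ) < κ - 1 := by linarith
    have hyinv : y⁻¹ = (s-1)/(s+1) := by rw [hydef, inv_div]
    have hsum : y + y⁻¹ = (2*κ+2)/(κ-1) := by
      rw [hydef, hyinv, div_add_div _ _ h1 h2]
      rw [div_eq_div_iff (by positivity) (ne_of_gt hκm1)]
      linear_combination (-4 : ℝ) * hs2
    have hb : b = κ * a := by rw [hκdef]; field_simp
    have hc : c = (y + y⁻¹)/2 := by
      rw [hcdef, hsum, hb]
      have e1 : a + κ * a = a * (κ+1) := by ring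
      have e2 : κ * a - a = a * (κ-1) := by ring
      rw [e1, e2, mul_div_mul_left _ _ (ne_of_gt ha)]
      rw [div_div]
      rw [div_eq_div_iff (ne_of_gt hκm1) (by positivity)]
      ring
    set Tc := (T ℝ (m : ℤ)).eval c with hTcdef
    have hTc : Tc = (y^m + (y⁻¹)^m)/2 := by
      rw [hTcdef, hc]
      exact (cheb_T_pair y hy0 m).1
    have hym : 0 < y^m := pow_pos (by linarith) m
    have hyim : 0 < (y⁻¹)^m := pow_pos (by positivity) m
    have hTcpos : 0 < Tc := by rw [hTc]; positivity
    have hTcge : y^m / 2 ≤ Tc := by rw [hTc]; linarith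
    have hTcinv : Tc⁻¹ ≤ 2 * ρ^m := by
      rw [hρy, inv_pow]
      calc Tc⁻¹ = 1 / Tc := (one_div Tc).symm
        _ ≤ 1 / (y^m / 2) := one_div_le_one_div_of_le (by positivity) hTcge
        _ = 2 * (y^m)⁻¹ := by
            rw [one_div, inv_div, div_eq_mul_inv, mul_comm]
    refine ⟨C Tc⁻¹ * ((T ℝ (m : ℤ)).comp (C c - C (2/(b-a)) * X)), ?_, ?_, ?_⟩
    · refine le_trans (natDegree_C_mul_le _ _) (le_trans natDegree_comp_le ?_)
      have hdT := (cheb_T_deg_pair m).1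
      have haff : (C c - C (2/(b-a)) * X).natDegree ≤ 1 := by
        refine le_trans (natDegree_sub_le _ _) ?_
        simp only [natDegree_C, max_le_iff]
        exact ⟨by omega, le_trans natDegree_mul_le (by simp [natDegree_X_le])⟩
      calc (T ℝ (m:ℤ)).natDegree * (C c - C (2/(b-a)) * X).natDegree
          ≤ m * 1 := Nat.mul_le_mul hdT haff
        _ = m := by omega
    · simp only [eval_mul, eval_C, eval_comp, eval_sub, eval_X, mul_zero, sub_zero]
      rw [← hTcdef]
      exact inv_mul_cancel₀ (ne_of_gt hTcpos)
    · intro t ht1 ht2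
      simp only [eval_mul, eval_C, eval_comp, eval_sub, eval_X]
      rw [abs_mul, abs_of_pos (by positivity : (0:ℝ) < Tc⁻¹)]
      have hba : 0 < b - a := by linarith
      have hrw : c - 2/(b-a) * t = (a+b-2*t)/(b-a) := by
        rw [hcdef]
        field_simp
      have hx1 : c - 2/(b-a) * t ≤ 1 := by
        rw [hrw, div_le_one hba]; linarith
      have hx2 : -1 ≤ c - 2/(b-a) * t := by
        rw [hrw, le_div_iff₀ hba]; linarith
      calc Tc⁻¹ * |(T ℝ (m:ℤ)).eval (c - 2/(b-a) * t)|
          ≤ Tc⁻¹ * 1 := by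
            apply mul_le_mul_of_nonneg_left (cheb_T_abs_le m hx2 hx1) (le_of_lt (by positivity))
        _ = Tc⁻¹ := mul_one _
        _ ≤ 2 * ρ^m := hTcinv

end AuxLemmas

lemma dot_self_pos {n : ℕ} {v : Fin n → ℝ} (hv : v ≠ 0) : 0 < v ⬝ᵥ v := by
  have h1 : v ⬝ᵥ v = ∑ i, (v i)^2 := by simp [dotProduct, pow_two]
  rw [h1]
  obtain ⟨i, hi⟩ := Function.ne_iff.mp hv
  exact Finset.sum_pos' (fun j _ => sq_nonneg _) ⟨i, Finset.mem_univ i, sq_pos_of_ne_zero hi⟩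

lemma sum_mulVec' {n : ℕ} {ι : Type*} (s : Finset ι) (M : ι → Matrix (Fin n) (Fin n) ℝ)
    (v : Fin n → ℝ) : (∑ j ∈ s, M j) *ᵥ v = ∑ j ∈ s, (M j *ᵥ v) := by
  classical
  induction s using Finset.induction with
  | empty => simp
  | insert _ _ h ih => rw [Finset.sum_insert h, Finset.sum_insert h, Matrix.add_mulVec, ih]

/-- A-priori bound for the solution error of the GLTR method: under the TRS optimality
conditions with `‖s_opt‖ = Δ`, `A + λ_opt I ≻ 0`, `κ = (α₁ + λ_opt)/(α_n + λ_opt)`, and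
`s_k` a minimizer of `q` over `{s ∈ K_k(g,A) : ‖s‖ ≤ Δ}` with `‖s_k‖ = Δ`,
`‖s_k − s_opt‖ ≤ 4 √κ Δ ((√κ − 1)/(√κ + 1))^{k+1}`. -/
theorem stmt_18 {n : ℕ} (A : Matrix (Fin n) (Fin n) ℝ) (hA : A.IsSymm)
    (α₁ αn : ℝ)
    (hα₁ : (∃ v : Fin n → ℝ, v ≠ 0 ∧ A.mulVec v = α₁ • v) ∧
      ∀ (μ : ℝ) (v : Fin n → ℝ), v ≠ 0 → A.mulVec v = μ • v → μ ≤ α₁)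
    (hαn : (∃ v : Fin n → ℝ, v ≠ 0 ∧ A.mulVec v = αn • v) ∧
      ∀ (μ : ℝ) (v : Fin n → ℝ), v ≠ 0 → A.mulVec v = μ • v → αn ≤ μ)
    (g : Fin n → ℝ) (hg : g ≠ 0) (Δ : ℝ) (hΔ : 0 < Δ)
    (q : (Fin n → ℝ) → ℝ)
    (hq : ∀ s, q s = g ⬝ᵥ s + (1 / 2) * (s ⬝ᵥ A.mulVec s))
    (lamopt : ℝ) (sopt : Fin n → ℝ)
    (h1 : vecEnorm sopt = Δ) (h2 : 0 ≤ lamopt)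
    (h3 : (A + lamopt • (1 : Matrix (Fin n) (Fin n) ℝ)).mulVec sopt = -g)
    (h4 : lamopt * (Δ - vecEnorm sopt) = 0)
    (h5 : (A + lamopt • (1 : Matrix (Fin n) (Fin n) ℝ)).PosDef)
    (κ : ℝ) (hκ : κ = (α₁ + lamopt) / (αn + lamopt))
    (k : ℕ) (sk : Fin n → ℝ)
    (hskmem : sk ∈ krylov A g k) (hsknorm : vecEnorm sk = Δ)
    (hskmin : ∀ s ∈ krylov A g k, vecEnorm s ≤ Δ → q sk ≤ q s) :
    vecEnorm (sk - sopt) ≤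
      4 * Real.sqrt κ * Δ * ((Real.sqrt κ - 1) / (Real.sqrt κ + 1)) ^ (k + 1) := by
  classical
  set B := A + lamopt • (1 : Matrix (Fin n) (Fin n) ℝ) with hBdef
  have hB : B.IsHermitian := h5.1
  set u := hB.eigenvectorBasis with hudef
  set t := hB.eigenvalues with htdef
  set Φ : (Fin n → ℝ) → EuclideanSpace ℝ (Fin n) :=
    fun x => (show EuclideanSpace ℝ (Fin n) from (WithLp.equiv 2 (Fin n → ℝ)).symm x) with hΦdef
  set co : (Fin n → ℝ) → Fin n → ℝ := fun x i => u.repr (Φ x) i with hcodef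
  -- basic bridges
  have inner_dot : ∀ x y : Fin n → ℝ, (inner ℝ (Φ x) (Φ y) : ℝ) = x ⬝ᵥ y := by
    intro x y
    simp [PiLp.inner_apply, RCLike.inner_apply, dotProduct, hΦdef]
    exact Finset.sum_congr rfl fun i _ => mul_comm _ _
  have hdot : ∀ x y : Fin n → ℝ, x ⬝ᵥ y = ∑ i, co x i * co y i := by
    intro x y
    have h := u.repr.inner_map_map (Φ x) (Φ y)
    rw [← inner_dot, ← h, PiLp.inner_apply]
    simp only [RCLike.inner_apply, RCLike.star_def, RCLike.conj_to_real]
    exact Finset.sum_congr rfl fun i _ => mul_comm _ _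
  have henorm : ∀ x : Fin n → ℝ, vecEnorm x = Real.sqrt (∑ i, (co x i)^2) := by
    intro x
    rw [vecEnorm, show ((WithLp.equiv 2 (Fin n → ℝ)).symm x) = Φ x from rfl,
      ← u.repr.norm_map (Φ x), EuclideanSpace.norm_eq]
    congr 1
    refine Finset.sum_congr rfl fun i _ => ?_
    simp [hcodef, Real.norm_eq_abs, sq_abs]
  have henorm_sq : ∀ x : Fin n → ℝ, vecEnorm x ^ 2 = ∑ i, (co x i)^2 := fun x => by
    rw [henorm]; exact Real.sq_sqrt (Finset.sum_nonneg fun i _ => sq_nonneg _)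
  have henorm_nonneg : ∀ x : Fin n → ℝ, 0 ≤ vecEnorm x := fun x => by
    rw [henorm]; exact Real.sqrt_nonneg _
  -- coordinate lemmas
  have hui_dot : ∀ (x : Fin n → ℝ) (i : Fin n), (⇑(u i) : Fin n → ℝ) ⬝ᵥ x = co x i := by
    intro x i
    show _ = u.repr (Φ x) i
    rw [u.repr_apply_apply]
    exact (inner_dot _ _).symm
  have hBT : Bᵀ = B := by
    have h := hB
    rwa [Matrix.IsHermitian, Matrix.conjTranspose_eq_transpose_of_trivial] at h
  have hvecB : ∀ v : Fin n → ℝ, v ᵥ* B = B *ᵥ v := by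
    intro v
    conv_lhs => rw [← hBT]
    rw [Matrix.vecMul_transpose]
  have hmv : ∀ (x : Fin n → ℝ) (i : Fin n), co (B *ᵥ x) i = t i * co x i := by
    intro x i
    rw [← hui_dot, dotProduct_mulVec, hvecB, hB.mulVec_eigenvectorBasis i,
      smul_dotProduct, hui_dot]
    rfl
  have hco_sub : ∀ (x y : Fin n → ℝ) i, co (x - y) i = co x i - co y i := by
    intro x y i
    simp [hcodef, hΦdef, WithLp.equiv_symm_apply, WithLp.toLp_sub, map_sub]
  have hco_add : ∀ (x y : Fin n → ℝ) i, co (x + y) i = co x i + co y i := by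
    intro x y i
    simp [hcodef, hΦdef, WithLp.equiv_symm_apply, WithLp.toLp_add, map_add]
  have hco_smul : ∀ (c : ℝ) (x : Fin n → ℝ) i, co (c • x) i = c * co x i := by
    intro c x i
    simp [hcodef, hΦdef, WithLp.equiv_symm_apply, WithLp.toLp_smul, _root_.map_smul]
  have hco_neg : ∀ (x : Fin n → ℝ) i, co (-x) i = -(co x i) := by
    intro x i
    have := hco_sub 0 x i
    simpa [hcodef, hΦdef] using this
  -- eigenvalue range
  have huine : ∀ i, (⇑(u i) : Fin n → ℝ) ≠ 0 := by
    intro i h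
    exact u.orthonormal.ne_zero i (by simpa using h)
  have hBx : ∀ x : Fin n → ℝ, B *ᵥ x = A *ᵥ x + lamopt • x := by
    intro x
    rw [hBdef, Matrix.add_mulVec, Matrix.smul_mulVec, Matrix.one_mulVec]
  have hAui : ∀ i, A *ᵥ (⇑(u i) : Fin n → ℝ) = (t i - lamopt) • ⇑(u i) := by
    intro i
    have h := hB.mulVec_eigenvectorBasis i
    rw [hBx] at h
    have h2 : A *ᵥ (⇑(u i) : Fin n → ℝ) = t i • ⇑(u i) - lamopt • ⇑(u i) := by
      rw [← h]; abel
    rw [h2, sub_smul]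
  have htle : ∀ i, t i ≤ α₁ + lamopt := by
    intro i
    have := hα₁.2 (t i - lamopt) _ (huine i) (hAui i)
    linarith
  have htge : ∀ i, αn + lamopt ≤ t i := by
    intro i
    have := hαn.2 (t i - lamopt) _ (huine i) (hAui i)
    linarith
  obtain ⟨v₁, hv₁ne, hv₁⟩ := hα₁.1
  obtain ⟨vn, hvnne, hvn⟩ := hαn.1
  have hBvn : B *ᵥ vn = (αn + lamopt) • vn := by
    rw [hBdef, Matrix.add_mulVec, Matrix.smul_mulVec, Matrix.one_mulVec, hvn, add_smul]
  have ha : 0 < αn + lamopt := by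
    have hp := h5.dotProduct_mulVec_pos hvnne
    rw [show star vn = vn from rfl] at hp
    rw [hBvn, dotProduct_smul, smul_eq_mul] at hp
    have hvv : 0 < vn ⬝ᵥ vn := dot_self_pos hvnne
    nlinarith
  have hab : αn + lamopt ≤ α₁ + lamopt := by
    have := hα₁.2 αn vn hvnne hvn
    linarith
  -- quadratic form facts
  have hQB_coords : ∀ v : Fin n → ℝ, v ⬝ᵥ (B *ᵥ v) = ∑ i, t i * (co v i)^2 := by
    intro v
    rw [hdot v (B *ᵥ v)]
    refine Finset.sum_congr rfl fun i _ => ?_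
    rw [hmv]; ring
  have hQB_ge : ∀ v : Fin n → ℝ, (αn + lamopt) * vecEnorm v ^ 2 ≤ v ⬝ᵥ (B *ᵥ v) := by
    intro v
    rw [hQB_coords, henorm_sq, Finset.mul_sum]
    exact Finset.sum_le_sum fun i _ => mul_le_mul_of_nonneg_right (htge i) (sq_nonneg _)
  have hQB_le : ∀ v : Fin n → ℝ, v ⬝ᵥ (B *ᵥ v) ≤ (α₁ + lamopt) * vecEnorm v ^ 2 := by
    intro v
    rw [hQB_coords, henorm_sq, Finset.mul_sum]
    exact Finset.sum_le_sum fun i _ => mul_le_mul_of_nonneg_right (htle i) (sq_nonneg _)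
  -- key identity
  have hdot_self : ∀ x : Fin n → ℝ, x ⬝ᵥ x = vecEnorm x ^ 2 := by
    intro x
    rw [hdot x x, henorm_sq]
    exact Finset.sum_congr rfl fun i _ => (pow_two _).symm
  have h3' : B *ᵥ sopt = -g := h3
  have hkey : ∀ x : Fin n → ℝ, vecEnorm x = Δ →
      2 * (q x - q sopt) = (x - sopt) ⬝ᵥ (B *ᵥ (x - sopt)) := by
    intro x hx
    have hxx : x ⬝ᵥ x = Δ^2 := by rw [hdot_self, hx]
    have hss0 : sopt ⬝ᵥ sopt = Δ^2 := by rw [hdot_self, h1]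
    have hsx : sopt ⬝ᵥ (B *ᵥ x) = -(g ⬝ᵥ x) := by
      rw [dotProduct_mulVec, hvecB, h3', neg_dotProduct]
    have hxs : x ⬝ᵥ (B *ᵥ sopt) = -(g ⬝ᵥ x) := by
      rw [h3', dotProduct_neg, dotProduct_comm]
    have hss : sopt ⬝ᵥ (B *ᵥ sopt) = -(g ⬝ᵥ sopt) := by
      rw [h3', dotProduct_neg, dotProduct_comm]
    have hQx : x ⬝ᵥ (B *ᵥ x) = x ⬝ᵥ (A *ᵥ x) + lamopt * Δ^2 := by
      rw [hBdef, Matrix.add_mulVec, dotProduct_add, Matrix.smul_mulVec,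
        Matrix.one_mulVec, dotProduct_smul, smul_eq_mul, hxx]
    have hQs : sopt ⬝ᵥ (B *ᵥ sopt) = sopt ⬝ᵥ (A *ᵥ sopt) + lamopt * Δ^2 := by
      rw [hBdef, Matrix.add_mulVec, dotProduct_add, Matrix.smul_mulVec,
        Matrix.one_mulVec, dotProduct_smul, smul_eq_mul, hss0]
    have hexp : (x - sopt) ⬝ᵥ (B *ᵥ (x - sopt)) =
        x ⬝ᵥ (B *ᵥ x) - x ⬝ᵥ (B *ᵥ sopt) - sopt ⬝ᵥ (B *ᵥ x) + sopt ⬝ᵥ (B *ᵥ sopt) := by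
      rw [Matrix.mulVec_sub, sub_dotProduct, dotProduct_sub, dotProduct_sub]
      ring
    rw [hexp, hq x, hq sopt, hsx, hxs, hss]
    have hAx : x ⬝ᵥ (A *ᵥ x) = x ⬝ᵥ (B *ᵥ x) - lamopt * Δ^2 := by rw [hQx]; ring
    have hAs : sopt ⬝ᵥ (A *ᵥ sopt) = -(g ⬝ᵥ sopt) - lamopt * Δ^2 := by
      rw [← hss, hQs]; ring
    rw [hAx, hAs]
    ring
  -- polynomial application in coordinates
  have hpow : ∀ (j : ℕ) (x : Fin n → ℝ) (i : Fin n), co ((B^j) *ᵥ x) i = (t i)^j * co x i := by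
    intro j
    induction j with
    | zero => intro x i; simp [Matrix.one_mulVec]
    | succ j ih =>
      intro x i
      rw [pow_succ, ← Matrix.mulVec_mulVec, ih, hmv]
      ring
  have haeval : ∀ (P : Polynomial ℝ) (x : Fin n → ℝ) (i : Fin n),
      co ((Polynomial.aeval B P) *ᵥ x) i = P.eval (t i) * co x i := by
    intro P
    induction P using Polynomial.induction_on' with
    | add p r hp hr =>
      intro x i
      rw [map_add, Matrix.add_mulVec, hco_add, hp, hr, Polynomial.eval_add]
      ring
    | monomial j a =>
      intro x i
      rw [Polynomial.aeval_monomial, Polynomial.eval_monomial]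
      have hsm : (algebraMap ℝ (Matrix (Fin n) (Fin n) ℝ) a) * B^j = a • B^j :=
        (Algebra.smul_def a (B^j)).symm
      rw [hsm, Matrix.smul_mulVec, hco_smul, hpow]
      ring
  -- Krylov membership
  have hkry_mono : ∀ j, krylov A g j ≤ krylov A g (j+1) := by
    intro j
    apply Submodule.span_mono
    rintro v ⟨i, hi, rfl⟩
    exact ⟨i, by omega, rfl⟩
  have hkry_A : ∀ j (x : Fin n → ℝ), x ∈ krylov A g j → A *ᵥ x ∈ krylov A g (j+1) := by
    intro j x hx
    induction hx using Submodule.span_induction with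
    | mem v hv =>
      obtain ⟨i, hi, rfl⟩ := hv
      apply Submodule.subset_span
      exact ⟨i+1, by omega, by rw [Matrix.mulVec_mulVec, ← pow_succ']⟩
    | zero => rw [Matrix.mulVec_zero]; exact Submodule.zero_mem _
    | add a b _ _ ha hb => rw [Matrix.mulVec_add]; exact Submodule.add_mem _ ha hb
    | smul c a _ ha => rw [Matrix.mulVec_smul]; exact Submodule.smul_mem _ c ha
  have hBjmem : ∀ j, (B^j) *ᵥ g ∈ krylov A g j := by
    intro j
    induction j with
    | zero =>
      rw [pow_zero, Matrix.one_mulVec]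
      exact Submodule.subset_span ⟨0, Nat.zero_le _, by rw [pow_zero, Matrix.one_mulVec]⟩
    | succ j ih =>
      have hstep : (B^(j+1)) *ᵥ g = A *ᵥ ((B^j) *ᵥ g) + lamopt • ((B^j) *ᵥ g) := by
        rw [pow_succ', ← Matrix.mulVec_mulVec, hBx]
      rw [hstep]
      exact Submodule.add_mem _ (hkry_A j _ ih) (Submodule.smul_mem _ _ (hkry_mono j ih))
  have hBj' : ∀ j, j ≤ k → (B^j) *ᵥ g ∈ krylov A g k := by
    intro j hj
    have hle : krylov A g j ≤ krylov A g k := by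
      apply Submodule.span_mono
      rintro v ⟨i, hi, rfl⟩
      exact ⟨i, by omega, rfl⟩
    exact hle (hBjmem j)
  have haev_mem : ∀ P : Polynomial ℝ, P.natDegree ≤ k →
      ((Polynomial.aeval B P) *ᵥ g) ∈ krylov A g k := by
    intro P hP
    rw [Polynomial.aeval_eq_sum_range, sum_mulVec']
    apply Submodule.sum_mem
    intro j hj
    rw [Matrix.smul_mulVec]
    refine Submodule.smul_mem _ _ (hBj' j ?_)
    have := Finset.mem_range.mp hj
    omega
  -- the residual polynomial
  set m' := k + 1 with hm'def
  set s := Real.sqrt κ with hsdef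
  set ρ := (s - 1)/(s + 1) with hρdef
  have hκ1 : 1 ≤ κ := by
    rw [hκ, le_div_iff₀ ha]; linarith
  have hκ0 : (0:ℝ) ≤ κ := by linarith
  have hs1 : 1 ≤ s := by
    rw [hsdef, show (1:ℝ) = Real.sqrt 1 from Real.sqrt_one.symm]
    exact Real.sqrt_le_sqrt hκ1
  have hρnn : 0 ≤ ρ := div_nonneg (by linarith) (by linarith)
  obtain ⟨R, hRdeg, hR0, hRb⟩ := resid_poly (αn + lamopt) (α₁ + lamopt) ha hab m' (by omega)
  have hRb' : ∀ i : Fin n, |R.eval (t i)| ≤ 2 * ρ ^ m' := by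
    intro i
    have h := hRb (t i) (htge i) (htle i)
    rw [← hκ] at h
    exact h
  set Q := R.divX with hQdef
  have hQdeg : Q.natDegree ≤ k := by
    show R.divX.natDegree ≤ k
    have hd1 := R.natDegree_divX_eq_natDegree_tsub_one
    have hd2 : R.natDegree ≤ k + 1 := hm'def ▸ hRdeg
    omega
  have hReval : ∀ τ : ℝ, R.eval τ = τ * Q.eval τ + 1 := by
    intro τ
    conv_lhs => rw [← Polynomial.X_mul_divX_add R]
    rw [Polynomial.eval_add, Polynomial.eval_mul, Polynomial.eval_X, Polynomial.eval_C,
      Polynomial.coeff_zero_eq_eval_zero, hR0]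
  -- sopt coordinates
  have hts : ∀ i, t i * co sopt i = -(co g i) := by
    intro i
    have h := hmv sopt i
    rw [h3', hco_neg] at h
    linarith
  set w := (Polynomial.aeval B Q) *ᵥ g with hwdef
  have hw_mem : w ∈ krylov A g k := haev_mem Q hQdeg
  have hwco : ∀ i, co (w - sopt) i = -(R.eval (t i)) * co sopt i := by
    intro i
    have h1' := haeval Q g i
    have h2' : co g i = -(t i * co sopt i) := by linarith [hts i]
    rw [hco_sub, h1', h2', hReval (t i)]
    ring
  have hwclose : vecEnorm (w - sopt) ≤ 2 * ρ ^ m' * Δ := by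
    have hΔs : ∑ i, (co sopt i)^2 = Δ^2 := by rw [← henorm_sq, h1]
    have hsum : ∑ i, (co (w - sopt) i)^2 ≤ (2 * ρ ^ m')^2 * ∑ i, (co sopt i)^2 := by
      rw [Finset.mul_sum]
      apply Finset.sum_le_sum
      intro i _
      rw [hwco i]
      have he : (-(R.eval (t i)) * co sopt i)^2 = (R.eval (t i))^2 * (co sopt i)^2 := by ring
      rw [he]
      apply mul_le_mul_of_nonneg_right _ (sq_nonneg _)
      calc (R.eval (t i))^2 = |R.eval (t i)|^2 := (sq_abs _).symm
        _ ≤ (2 * ρ^m')^2 := pow_le_pow_left₀ (abs_nonneg _) (hRb' i) 2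
    have hsq : vecEnorm (w - sopt)^2 ≤ (2 * ρ^m' * Δ)^2 := by
      rw [henorm_sq]
      calc ∑ i, (co (w - sopt) i)^2 ≤ (2 * ρ^m')^2 * ∑ i, (co sopt i)^2 := hsum
        _ = (2 * ρ^m')^2 * Δ^2 := by rw [hΔs]
        _ = (2 * ρ^m' * Δ)^2 := by ring
    have h0' : (0:ℝ) ≤ 2 * ρ^m' * Δ := by positivity
    have := Real.sqrt_le_sqrt hsq
    rwa [Real.sqrt_sq (henorm_nonneg _), Real.sqrt_sq h0'] at this
  -- norm toolbox
  have hg_mem0 : g ∈ krylov A g k :=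
    Submodule.subset_span ⟨0, Nat.zero_le _, by rw [pow_zero, Matrix.one_mulVec]⟩
  have henorm_pos : ∀ x : Fin n → ℝ, x ≠ 0 → 0 < vecEnorm x := by
    intro x hx
    rw [vecEnorm, norm_pos_iff]
    intro hc
    apply hx
    have := congrArg (WithLp.equiv 2 (Fin n → ℝ)) hc
    simpa using this
  have henorm_smul : ∀ (c : ℝ) (x : Fin n → ℝ), vecEnorm (c • x) = |c| * vecEnorm x := by
    intro c x
    rw [vecEnorm, vecEnorm, WithLp.equiv_symm_apply, WithLp.toLp_smul, norm_smul, Real.norm_eq_abs]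
  have htri : ∀ x y : Fin n → ℝ, vecEnorm (x + y) ≤ vecEnorm x + vecEnorm y := by
    intro x y
    rw [vecEnorm, vecEnorm, vecEnorm, WithLp.equiv_symm_apply, WithLp.toLp_add]
    exact norm_add_le _ _
  have habs2 : ∀ x y : Fin n → ℝ, |vecEnorm x - vecEnorm y| ≤ vecEnorm (x - y) := by
    intro x y
    rw [vecEnorm, vecEnorm, vecEnorm, WithLp.equiv_symm_apply, WithLp.toLp_sub]
    exact abs_norm_sub_norm_le _ _
  have hrev : ∀ x y : Fin n → ℝ, vecEnorm (x - y) = vecEnorm (y - x) := by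
    intro x y
    rw [vecEnorm, vecEnorm, WithLp.equiv_symm_apply, WithLp.toLp_sub, WithLp.toLp_sub]
    exact norm_sub_rev _ _
  have hneg : ∀ x : Fin n → ℝ, vecEnorm (-x) = vecEnorm x := by
    intro x
    have := hrev 0 x
    simpa using this
  obtain ⟨sh, hsh_mem, hsh_norm, hsh_close⟩ :
      ∃ sh, sh ∈ krylov A g k ∧ vecEnorm sh = Δ ∧
        vecEnorm (sh - sopt) ≤ 2 * vecEnorm (w - sopt) := by
    by_cases hw0 : w = 0
    · refine ⟨(Δ / vecEnorm g) • g, Submodule.smul_mem _ _ hg_mem0, ?_, ?_⟩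
      · rw [henorm_smul, abs_of_pos (div_pos hΔ (henorm_pos g hg)),
          div_mul_cancel₀ _ (ne_of_gt (henorm_pos g hg))]
      · have hws : vecEnorm (w - sopt) = Δ := by
          rw [hw0, zero_sub, hneg, h1]
        have hnorm1 : vecEnorm ((Δ / vecEnorm g) • g) = Δ := by
          rw [henorm_smul, abs_of_pos (div_pos hΔ (henorm_pos g hg)),
            div_mul_cancel₀ _ (ne_of_gt (henorm_pos g hg))]
        have hdec : (Δ / vecEnorm g) • g - sopt = (Δ / vecEnorm g) • g + (-sopt) := by abel
        calc vecEnorm ((Δ / vecEnorm g) • g - sopt)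
            ≤ vecEnorm ((Δ / vecEnorm g) • g) + vecEnorm (-sopt) := by rw [hdec]; exact htri _ _
          _ = Δ + Δ := by rw [hnorm1, hneg, h1]
          _ = 2 * vecEnorm (w - sopt) := by rw [hws]; ring
    · have hew : 0 < vecEnorm w := henorm_pos w hw0
      refine ⟨(Δ / vecEnorm w) • w, Submodule.smul_mem _ _ hw_mem, ?_, ?_⟩
      · rw [henorm_smul, abs_of_pos (div_pos hΔ hew), div_mul_cancel₀ _ (ne_of_gt hew)]
      · have hs1' : (Δ / vecEnorm w) • w - w = (Δ / vecEnorm w - 1) • w := by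
          rw [sub_smul, one_smul]
        have hterm : vecEnorm ((Δ / vecEnorm w) • w - w) = |Δ - vecEnorm w| := by
          rw [hs1', henorm_smul,
            show Δ / vecEnorm w - 1 = (Δ - vecEnorm w) / vecEnorm w from by field_simp,
            abs_div, abs_of_pos hew, div_mul_cancel₀ _ (ne_of_gt hew)]
        have hterm2 : |Δ - vecEnorm w| ≤ vecEnorm (w - sopt) := by
          rw [← h1, hrev w sopt]
          exact habs2 sopt w
        have hdec : (Δ / vecEnorm w) • w - sopt =
            ((Δ / vecEnorm w) • w - w) + (w - sopt) := by abel
        calc vecEnorm ((Δ / vecEnorm w) • w - sopt)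
            ≤ vecEnorm ((Δ / vecEnorm w) • w - w) + vecEnorm (w - sopt) := by
              rw [hdec]; exact htri _ _
          _ ≤ vecEnorm (w - sopt) + vecEnorm (w - sopt) := by
              rw [hterm]; exact add_le_add_left hterm2 _
          _ = 2 * vecEnorm (w - sopt) := by ring
  -- main chain
  have hmain : (αn + lamopt) * vecEnorm (sk - sopt)^2 ≤
      (α₁ + lamopt) * vecEnorm (sh - sopt)^2 := by
    calc (αn + lamopt) * vecEnorm (sk - sopt)^2
        ≤ (sk - sopt) ⬝ᵥ (B *ᵥ (sk - sopt)) := hQB_ge _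
      _ = 2 * (q sk - q sopt) := (hkey sk hsknorm).symm
      _ ≤ 2 * (q sh - q sopt) := by
          have := hskmin sh hsh_mem (le_of_eq hsh_norm)
          linarith
      _ = (sh - sopt) ⬝ᵥ (B *ᵥ (sh - sopt)) := hkey sh hsh_norm
      _ ≤ (α₁ + lamopt) * vecEnorm (sh - sopt)^2 := hQB_le _
  have hM : vecEnorm (sh - sopt) ≤ 4 * ρ^m' * Δ := by
    calc vecEnorm (sh - sopt) ≤ 2 * vecEnorm (w - sopt) := hsh_close
      _ ≤ 2 * (2 * ρ^m' * Δ) := by linarith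
      _ = 4 * ρ^m' * Δ := by ring
  have hbeq : α₁ + lamopt = κ * (αn + lamopt) := by
    rw [hκ]
    field_simp
  have hs2 : s^2 = κ := Real.sq_sqrt hκ0
  have hsh2 : vecEnorm (sh - sopt)^2 ≤ (4*ρ^m'*Δ)^2 :=
    pow_le_pow_left₀ (henorm_nonneg _) hM 2
  have h7 : (αn+lamopt) * vecEnorm (sk-sopt)^2 ≤ (αn+lamopt) * (κ * (4*ρ^m'*Δ)^2) := by
    calc (αn+lamopt) * vecEnorm (sk-sopt)^2
        ≤ (α₁+lamopt) * vecEnorm (sh-sopt)^2 := hmain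
      _ ≤ (α₁+lamopt) * (4*ρ^m'*Δ)^2 := by
          apply mul_le_mul_of_nonneg_left hsh2 (by linarith)
      _ = (αn+lamopt) * (κ * (4*ρ^m'*Δ)^2) := by rw [hbeq]; ring
  have h8 : vecEnorm (sk-sopt)^2 ≤ κ * (4*ρ^m'*Δ)^2 :=
    le_of_mul_le_mul_left h7 ha
  have h9 : vecEnorm (sk-sopt)^2 ≤ (s * (4*ρ^m'*Δ))^2 := by
    calc vecEnorm (sk-sopt)^2 ≤ κ * (4*ρ^m'*Δ)^2 := h8
      _ = (s * (4*ρ^m'*Δ))^2 := by rw [mul_pow s (4*ρ^m'*Δ) 2, hs2]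
  have h10 := Real.sqrt_le_sqrt h9
  rw [Real.sqrt_sq (henorm_nonneg _),
    Real.sqrt_sq (by positivity : (0:ℝ) ≤ s * (4*ρ^m'*Δ))] at h10
  calc vecEnorm (sk - sopt) ≤ s * (4*ρ^m'*Δ) := h10
    _ = 4 * s * Δ * ρ ^ m' := by ring
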